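/- arXiv:1506.06480 — 7 statements merged into one kernel-verified Lean document; each statement's English description precedes it below -/
import Mathlib

section
/- Let (R, m) be a two-dimensional regular local ring with m = (x, y), and let 1 < m ≤ n be integers. Set I = (x^m) + m^n and Q = (x^m, y^n). Then Q : I = m^{m-1}. -/
/-!
By Krull's principal ideal theorem `(x)` is not `𝔪`-primary, so `R ⧸ (x)` is a Noetherian local
ring whose maximal ideal is generated by the non-nilpotent element `y`; by the Krull intersection
theorem `y` is then a nonzerodivisor on it. Hence `y` is regular modulo every `x ^ a` and,
symmetrically, `x` modulo every `y ^ b`.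

With `Q = (x ^ m, y ^ n)`, the inclusion `𝔪 ^ (m - 1) ⊆ Q : I` holds because
`𝔪 ^ (m + n - 1) ⊆ Q`. Conversely, suppose `s x ^ k 𝔪 ^ n ⊆ Q` with `j + k + 1 = m`. Testing
against `x ^ (j + 1) y ^ (n - j - 1) ∈ 𝔪 ^ n` and cancelling first `y ^ (n - j - 1)` modulo `x ^ m`
and then `x ^ (m - 1)` modulo `y ^ (j + 1)` gives `s = c x + d y ^ (j + 1)`. Here
`c x ^ (k + 1) 𝔪 ^ n ⊆ Q`, so induction on `j` gives `s ∈ 𝔪 ^ j`.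
-/

open IsLocalRing Ideal

section

variable {R : Type*} [CommRing R]

theorem Ideal.span_singleton_mul_span_pow_pair_le (x y : R) (a b : ℕ) :
    span {x} * span {x ^ a, y ^ b} ≤ span {x ^ (a + 1), y ^ b} := by
  rw [span_singleton_mul_le_iff]
  intro z hz
  obtain ⟨p, q, rfl⟩ := mem_span_pair.mp hz
  exact mem_span_pair.mpr ⟨p, x * q, by ring⟩

theorem Ideal.span_pair_pow_le_span_pow_pow (x y : R) {k a b : ℕ} (hab : a + b ≤ k + 1) :
    span {x, y} ^ k ≤ span {x ^ a, y ^ b} := by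
  induction k generalizing x y a b with
  | zero =>
    obtain rfl | rfl : a = 0 ∨ b = 0 := by omega
    all_goals simp [span_insert]
  | succ k ih =>
    rcases a with _ | a
    · simp [span_insert]
    rcases b with _ | b
    · simp [span_insert]
    rw [pow_succ']
    nth_rw 1 [span_insert]
    rw [sup_mul]
    refine sup_le ?_ ?_
    · exact (mul_mono_right (ih x y (a := a) (b := b + 1) (by omega))).trans
        (span_singleton_mul_span_pow_pair_le x y a (b + 1))
    · rw [span_pair_comm, span_pair_comm (x := x ^ _)]
      exact (mul_mono_right (ih y x (a := b) (b := a + 1) (by omega))).trans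
        (span_singleton_mul_span_pow_pair_le y x b (a + 1))

theorem Ideal.pow_mul_pow_mem_span_pair_pow (x y : R) (a b : ℕ) :
    x ^ a * y ^ b ∈ span {x, y} ^ (a + b) :=
  pow_add (span {x, y}) a b ▸ mul_mem_mul (pow_mem_pow (subset_span (by simp)) a)
    (pow_mem_pow (subset_span (by simp)) b)

theorem isSMulRegular_quotient_span_pow {x y : R} (hx : IsSMulRegular R x)
    (hy : IsSMulRegular (R ⧸ span {x}) y) (M : ℕ) : IsSMulRegular (R ⧸ span {x ^ M}) y := by
  rw [isSMulRegular_quotient_iff_mem_of_smul_mem] at hy ⊢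
  induction M with
  | zero => simp
  | succ M ih =>
    intro a ha
    have hxa : y • a ∈ span {x} :=
      span_singleton_le_span_singleton.mpr (dvd_pow_self x M.succ_ne_zero) ha
    obtain ⟨b, rfl⟩ := mem_span_singleton'.mp (hy a hxa)
    obtain ⟨c, hc⟩ := mem_span_singleton'.mp ha
    have hyb : y • b ∈ span {x ^ M} :=
      mem_span_singleton'.mpr
        ⟨c, hx (by simp only [smul_eq_mul] at hc ⊢; linear_combination hc)⟩
    obtain ⟨d, rfl⟩ := mem_span_singleton'.mp (ih b hyb)
    exact mem_span_singleton'.mpr ⟨d, by ring⟩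

theorem exists_eq_mul_add_mul_pow_of_mul_mem_span_pow_pow {x y s : R} {a b l : ℕ}
    (hyx : IsSMulRegular (R ⧸ span {x ^ (a + 1)}) (y ^ l))
    (hxy : IsSMulRegular (R ⧸ span {y ^ b}) (x ^ a))
    (hs : s * (x ^ a * y ^ l) ∈ span {x ^ (a + 1), y ^ (b + l)}) :
    ∃ c d, s = c * x + d * y ^ b := by
  obtain ⟨p, q, hpq⟩ := mem_span_pair.mp hs
  have h₁ : s * x ^ a - q * y ^ b ∈ span {x ^ (a + 1)} :=
    mem_of_isSMulRegular_quotient_of_smul_mem hyx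
      (mem_span_singleton'.mpr ⟨p, by rw [smul_eq_mul]; linear_combination hpq⟩)
  obtain ⟨c, hc⟩ := mem_span_singleton'.mp h₁
  have h₂ : s - c * x ∈ span {y ^ b} :=
    mem_of_isSMulRegular_quotient_of_smul_mem hxy
      (mem_span_singleton'.mpr ⟨q, by rw [smul_eq_mul]; linear_combination hc⟩)
  obtain ⟨d, hd⟩ := mem_span_singleton'.mp h₂
  exact ⟨c, d, by linear_combination -hd⟩

theorem mem_span_pair_pow_of_forall_mul_pow_mul_mem {x y : R}
    (hyx : ∀ M, IsSMulRegular (R ⧸ span {x ^ M}) y)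
    (hxy : ∀ M, IsSMulRegular (R ⧸ span {y ^ M}) x)
    {m n j k : ℕ} (hmn : m ≤ n) (hjk : j + k + 1 = m) {s : R}
    (hs : ∀ z ∈ span {x, y} ^ n, s * (x ^ k * z) ∈ span {x ^ m, y ^ n}) :
    s ∈ span {x, y} ^ j := by
  induction j generalizing k s with
  | zero => simp
  | succ j ih =>
    subst hjk
    obtain ⟨l, rfl⟩ : ∃ l, n = j + 1 + l := ⟨n - (j + 1), by omega⟩
    have hs₀ : s * (x ^ (j + 1 + k) * y ^ l) ∈ span {x ^ (j + 1 + k + 1), y ^ (j + 1 + l)} := by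
      convert hs _ (pow_mul_pow_mem_span_pair_pow x y (j + 1) l) using 1
      ring
    obtain ⟨c, d, rfl⟩ := exists_eq_mul_add_mul_pow_of_mul_mem_span_pow_pow
      ((hyx _).pow l) ((hxy _).pow _) hs₀
    have hc : c ∈ span {x, y} ^ j := by
      refine ih (k := k + 1) (by omega) fun z hz => ?_
      have hyxz : y ^ (j + 1) * (x ^ k * z) ∈ span {x ^ (j + 1 + k + 1), y ^ (j + 1 + l)} := by
        refine span_pair_pow_le_span_pow_pow x y (k := k + (j + 1) + (j + 1 + l)) (by omega) ?_
        rw [← mul_assoc, mul_comm (y ^ _), pow_add]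
        exact mul_mem_mul (pow_mul_pow_mem_span_pair_pow x y k (j + 1)) hz
      convert sub_mem (hs z hz) (mul_mem_left _ d hyxz) using 1
      ring
    refine add_mem ?_ (mul_mem_left _ _ (pow_mem_pow (subset_span (by simp)) _))
    exact pow_succ (span {x, y}) j ▸ mul_mem_mul hc (subset_span (by simp))

theorem Ideal.colon_span_pow_pow_sup_eq_span_pair_pow {x y : R}
    (hyx : ∀ M, IsSMulRegular (R ⧸ span {x ^ M}) y)
    (hxy : ∀ M, IsSMulRegular (R ⧸ span {y ^ M}) x) {m n : ℕ} (hm : 1 ≤ m) (hmn : m ≤ n) :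
    Submodule.colon (span {x ^ m, y ^ n} : Ideal R)
      ((span {x ^ m} ⊔ span {x, y} ^ n : Ideal R) : Set R) = span {x, y} ^ (m - 1) := by
  refine le_antisymm (fun r hr => ?_) (fun r hr => Submodule.mem_colon.mpr fun p hp => ?_)
  · refine mem_span_pair_pow_of_forall_mul_pow_mul_mem hyx hxy hmn (k := 0) (by omega)
      fun z hz => ?_
    simpa using Submodule.mem_colon.mp hr z (Submodule.mem_sup_right hz)
  · obtain ⟨p₁, hp₁, p₂, hp₂, rfl⟩ := Submodule.mem_sup.mp hp
    rw [smul_eq_mul, mul_add]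
    refine add_mem (mul_mem_left _ r (span_mono (by simp) hp₁)) ?_
    refine span_pair_pow_le_span_pow_pow x y (k := m - 1 + n) (by omega) ?_
    exact pow_add (span {x, y}) _ _ ▸ mul_mem_mul hr hp₂

theorem IsLocalRing.isSMulRegular_of_maximalIdeal_eq_span_singleton {S : Type*} [CommRing S]
    [IsNoetherianRing S] [IsLocalRing S] {t : S} (hmax : maximalIdeal S = span {t})
    (ht : ¬ IsNilpotent t) : IsSMulRegular S t := by
  refine IsSMulRegular.of_right_eq_zero_of_smul fun a hta => ?_
  rw [smul_eq_mul] at hta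
  have hdiv : ∀ k, a ∈ maximalIdeal S ^ k := by
    intro k
    induction k with
    | zero => simp
    | succ k ih =>
      rw [hmax, span_singleton_pow, mem_span_singleton'] at ih ⊢
      obtain ⟨c, rfl⟩ := ih
      have hc : c ∈ maximalIdeal S := fun hcu =>
        ht ⟨k + 1, (hcu.mul_right_eq_zero).mp (by rw [pow_succ]; linear_combination hta)⟩
      rw [hmax, mem_span_singleton'] at hc
      obtain ⟨d, rfl⟩ := hc
      exact ⟨d, by ring⟩
  rw [← Submodule.mem_bot S,
    ← iInf_pow_eq_bot_of_isLocalRing _ (maximalIdeal.isMaximal S).ne_top]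
  exact Submodule.mem_iInf _ |>.mpr hdiv

theorem IsLocalRing.pow_notMem_span_singleton_of_maximalIdeal_eq_span_pair [IsNoetherianRing R]
    [IsLocalRing R] (hdim : 2 ≤ ringKrullDim R) {x y : R} (hm : maximalIdeal R = span {x, y})
    (N : ℕ) : y ^ N ∉ span {x} := by
  intro hyN
  have hx : x ∈ maximalIdeal R := hm ▸ subset_span (by simp)
  have hrad : (span {x}).radical = maximalIdeal R := by
    refine le_antisymm ?_ ?_
    · rw [← (maximalIdeal.isMaximal R).isPrime.radical]
      exact radical_mono ((span_singleton_le_iff_mem _).mpr hx)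
    · rw [hm, span_le, Set.insert_subset_iff, Set.singleton_subset_iff]
      exact ⟨le_radical (mem_span_singleton_self x), N, hyN⟩
  have hmin : maximalIdeal R ∈ (span {x}).minimalPrimes := by
    rw [← radical_minimalPrimes, hrad, minimalPrimes_eq_subsingleton_self]
    rfl
  have hle := height_le_one_of_isPrincipal_of_mem_minimalPrimes _ _ hmin
  rw [← maximalIdeal_height_eq_ringKrullDim] at hdim
  have : (2 : ℕ∞) ≤ 1 := (WithBot.coe_le_coe.mp hdim).trans hle
  norm_num at this

theorem IsLocalRing.isSMulRegular_quotient_span_pow_of_maximalIdeal_eq_span_pair [IsDomain R]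
    [IsNoetherianRing R] [IsLocalRing R] (hdim : 2 ≤ ringKrullDim R) {x y : R}
    (hm : maximalIdeal R = span {x, y}) (M : ℕ) : IsSMulRegular (R ⧸ span {x ^ M}) y := by
  have hy := pow_notMem_span_singleton_of_maximalIdeal_eq_span_pair hdim hm
  have hx0 : x ≠ 0 := by
    rintro rfl
    exact pow_notMem_span_singleton_of_maximalIdeal_eq_span_pair hdim
      (hm.trans span_pair_comm) 1 (by simp)
  refine isSMulRegular_quotient_span_pow (.of_ne_zero hx0) ?_ M
  have : Nontrivial (R ⧸ span {x}) :=
    Ideal.Quotient.nontrivial_iff.mpr fun h => hy 0 (by simp [h])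
  have : IsLocalRing (R ⧸ span {x}) := .of_surjective' _ Ideal.Quotient.mk_surjective
  have hmax : maximalIdeal (R ⧸ span {x}) = span {Ideal.Quotient.mk _ y} := by
    rw [← map_maximalIdeal_of_surjective _ Ideal.Quotient.mk_surjective, hm, map_span,
      Set.image_pair, Ideal.Quotient.eq_zero_iff_mem.mpr (mem_span_singleton_self x),
      span_insert_zero]
  have hnil : ¬ IsNilpotent (Ideal.Quotient.mk (span {x}) y) := fun ⟨N, hN⟩ =>
    hy N (Ideal.Quotient.eq_zero_iff_mem.mp (by rw [map_pow, hN]))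
  rw [← isSMulRegular_algebraMap_iff (R ⧸ span {x}), Ideal.Quotient.algebraMap_eq]
  exact isSMulRegular_of_maximalIdeal_eq_span_singleton hmax hnil

end

theorem stmt_0 (R : Type*) [CommRing R] [IsDomain R] [IsNoetherianRing R] [IsLocalRing R]
    (hdim : ringKrullDim R = 2) (x y : R)
    (hm : maximalIdeal R = Ideal.span {x, y})
    (m n : ℕ) (hm1 : 1 < m) (hmn : m ≤ n) :
    Submodule.colon (Ideal.span {x ^ m, y ^ n} : Ideal R)
        ((Ideal.span {x ^ m} ⊔ maximalIdeal R ^ n : Ideal R) : Set R) = maximalIdeal R ^ (m - 1) := by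
  rw [hm]
  exact colon_span_pow_pow_sup_eq_span_pair_pow
    (isSMulRegular_quotient_span_pow_of_maximalIdeal_eq_span_pair hdim.ge hm)
    (isSMulRegular_quotient_span_pow_of_maximalIdeal_eq_span_pair hdim.ge (hm.trans span_pair_comm))
    hm1.le hmn
end

section
/- Let (R, m) be a two-dimensional regular local ring with m = (x, y). Then for every integer m ≥ 2, the intersection ⋂_{i=1}^{m-1} (x^{m-i}, y^i) equals m^{m-1}. -/
/-!
By Krull's principal ideal theorem no power of `x` lies in `(y)`: otherwise the maximal ideal,
of height `2`, would be minimal over `(y)`. So `R ⧸ (y)` is a local ring whose maximal ideal is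
generated by the non-nilpotent image of `x`, and the Krull intersection theorem makes that image a
non-zero-divisor; as `y` is a non-zero-divisor, `x` is then regular modulo every `y ^ i`.
The inclusion `m ^ n ⊆ ⋂ (x ^ (n + 1 - i), y ^ i)` is monomial counting. Conversely, writing an
element of the intersection as `a x + b y ^ n` and cancelling `x` modulo each `y ^ i` puts `a` in
the intersection one level down, so induction on `n` applies.
-/

open IsLocalRing

theorem Ideal.sup_pow_add_add_one_le {R : Type*} [CommSemiring R] (I J : Ideal R) (p q : ℕ) :
    (I ⊔ J) ^ (p + q + 1) ≤ I ^ (p + 1) ⊔ J ^ (q + 1) := by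
  rw [← Ideal.add_eq_sup, ← Ideal.add_eq_sup, add_pow, Ideal.sum_eq_sup]
  refine Finset.sup_le fun k hk => ?_
  by_cases hpk : p + 1 ≤ k
  · exact Ideal.mul_le_left.trans (Ideal.mul_le_left.trans
      ((Ideal.pow_le_pow_right hpk).trans le_sup_left))
  · refine Ideal.mul_le_left.trans (Ideal.mul_le_right.trans
      ((Ideal.pow_le_pow_right ?_).trans le_sup_right))
    rw [Finset.mem_range] at hk
    omega

theorem Ideal.span_pair_pow_add_add_one_le {R : Type*} [CommSemiring R] (x y : R) (p q : ℕ) :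
    span {x, y} ^ (p + q + 1) ≤ span {x ^ (p + 1), y ^ (q + 1)} := by
  simpa only [span_insert, span_singleton_pow] using sup_pow_add_add_one_le (span {x}) (span {y}) p q

theorem IsLocalRing.mem_nonZeroDivisors_of_maximalIdeal_eq_span_singleton {S : Type*} [CommRing S]
    [IsNoetherianRing S] [IsLocalRing S] {t : S} (ht : maximalIdeal S = Ideal.span {t})
    (ht_nil : ¬ IsNilpotent t) : t ∈ nonZeroDivisors S := by
  refine mem_nonZeroDivisors_iff_right.mpr fun a hat => ?_
  -- If `a = c * t ^ k` then `c * t ^ (k + 1) = 0`, so `c` is not a unit, i.e. `c ∈ (t)`.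
  have hmem : ∀ k, a ∈ maximalIdeal S ^ k := by
    intro k
    induction k with
    | zero => simp
    | succ k ih =>
      rw [ht, Ideal.span_singleton_pow, Ideal.mem_span_singleton'] at ih ⊢
      obtain ⟨c, rfl⟩ := ih
      have hc : c ∈ maximalIdeal S := fun hc =>
        ht_nil ⟨k + 1, (hc.mul_right_eq_zero).mp (by rw [pow_succ, ← mul_assoc, hat])⟩
      rw [ht, Ideal.mem_span_singleton'] at hc
      obtain ⟨d, rfl⟩ := hc
      exact ⟨d, by ring⟩
  have : a ∈ ⨅ k : ℕ, maximalIdeal S ^ k := Ideal.mem_iInf.mpr hmem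
  rwa [Ideal.iInf_pow_eq_bot_of_isLocalRing _ (maximalIdeal.isMaximal S).ne_top] at this

theorem IsLocalRing.pow_notMem_span_singleton {R : Type*} [CommRing R] [IsNoetherianRing R]
    [IsLocalRing R] (hdim : 1 < ringKrullDim R) {x y : R}
    (hm : maximalIdeal R = Ideal.span {x, y}) (n : ℕ) : x ^ n ∉ Ideal.span {y} := by
  intro hxy
  have hmin : maximalIdeal R ∈ (Ideal.span {y}).minimalPrimes := by
    refine ⟨⟨inferInstance, ?_⟩, fun p ⟨hp, hyp⟩ _ => ?_⟩
    · rw [hm]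
      exact Ideal.span_mono (by simp)
    · rw [hm, Ideal.span_le, Set.pair_subset_iff]
      exact ⟨hp.mem_of_pow_mem n (hyp hxy), hyp (Ideal.mem_span_singleton_self y)⟩
  have := Ideal.height_le_one_of_isPrincipal_of_mem_minimalPrimes _ _ hmin
  rw [← maximalIdeal_height_eq_ringKrullDim] at hdim
  exact absurd hdim (not_lt.mpr (by exact_mod_cast this))

theorem IsLocalRing.mem_span_singleton_of_mul_mem {R : Type*} [CommRing R] [IsNoetherianRing R]
    [IsLocalRing R] {x y : R} (hm : maximalIdeal R = Ideal.span {x, y})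
    (hx : ∀ n : ℕ, x ^ n ∉ Ideal.span {y}) {c : R} (hc : x * c ∈ Ideal.span {y}) :
    c ∈ Ideal.span {y} := by
  set π := Ideal.Quotient.mk (Ideal.span {y})
  have : Nontrivial (R ⧸ Ideal.span {y}) :=
    Ideal.Quotient.nontrivial_iff.mpr fun h => hx 0 (by simp [h])
  have : IsLocalRing (R ⧸ Ideal.span {y}) := .of_surjective' π Ideal.Quotient.mk_surjective
  have hmπ : maximalIdeal (R ⧸ Ideal.span {y}) = Ideal.span {π x} := by
    rw [← map_maximalIdeal_of_surjective π Ideal.Quotient.mk_surjective, hm, Ideal.map_span,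
      Set.image_pair, Ideal.Quotient.mk_singleton_self, Set.pair_comm, Ideal.span_insert_zero]
  have hπx : π x ∈ nonZeroDivisors _ :=
    mem_nonZeroDivisors_of_maximalIdeal_eq_span_singleton hmπ fun ⟨n, hn⟩ =>
      hx n (Ideal.Quotient.eq_zero_iff_mem.mp (by rw [map_pow, hn]))
  rw [← Ideal.Quotient.eq_zero_iff_mem, map_mul] at hc
  exact Ideal.Quotient.eq_zero_iff_mem.mp ((mem_nonZeroDivisors_iff_left.mp hπx) _ hc)

theorem Ideal.mem_span_singleton_pow_of_mul_mem {R : Type*} [CommRing R] {x y : R}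
    (hy : y ∈ nonZeroDivisors R) (hreg : ∀ c, x * c ∈ span {y} → c ∈ span {y}) (i : ℕ) {c : R}
    (hc : x * c ∈ span {y ^ i}) : c ∈ span {y ^ i} := by
  induction i generalizing c with
  | zero => simp
  | succ i ih =>
    obtain ⟨r, hr⟩ := mem_span_singleton'.mp hc
    obtain ⟨c', rfl⟩ := mem_span_singleton'.mp
      (hreg c (mem_span_singleton'.mpr ⟨r * y ^ i, by rw [← hr]; ring⟩))
    have hxc' : x * c' = r * y ^ i :=
      sub_eq_zero.mp ((mem_nonZeroDivisors_iff_right.mp hy) _ (by linear_combination -hr))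
    obtain ⟨s, rfl⟩ := mem_span_singleton'.mp (ih (mem_span_singleton'.mpr ⟨r, hxc'.symm⟩))
    exact mem_span_singleton'.mpr ⟨s, by ring⟩

theorem Ideal.mem_span_pair_of_mul_mem {R : Type*} [CommRing R] {x z a : R}
    (hreg : ∀ c, x * c ∈ span {z} → c ∈ span {z}) {k : ℕ}
    (h : x * a ∈ span {x ^ (k + 1), z}) : a ∈ span {x ^ k, z} := by
  obtain ⟨c, d, hcd⟩ := mem_span_pair.mp h
  obtain ⟨e, he⟩ := mem_span_singleton'.mp
    (hreg (a - c * x ^ k) (mem_span_singleton'.mpr ⟨d, by linear_combination hcd⟩))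
  exact mem_span_pair.mpr ⟨c, e, by linear_combination he⟩

theorem Ideal.span_pair_pow_le_iInf {R : Type*} [CommSemiring R] (x y : R) (n : ℕ) :
    span {x, y} ^ n ≤ ⨅ i ∈ Finset.Icc 1 n, span {x ^ (n + 1 - i), y ^ i} := by
  refine le_iInf₂ fun i hi => ?_
  rw [Finset.mem_Icc] at hi
  have h := span_pair_pow_add_add_one_le x y (n - i) (i - 1)
  rwa [show n - i + (i - 1) + 1 = n by omega, show n - i + 1 = n + 1 - i by omega,
    Nat.sub_add_cancel hi.1] at h

theorem Ideal.iInf_span_pow_pair_le_span_pair_pow {R : Type*} [CommRing R] {x y : R}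
    (hreg : ∀ i c, x * c ∈ span {y ^ i} → c ∈ span {y ^ i}) {n : ℕ} (hn : 1 ≤ n) :
    ⨅ i ∈ Finset.Icc 1 n, span {x ^ (n + 1 - i), y ^ i} ≤ span {x, y} ^ n := by
  induction n, hn using Nat.le_induction with
  | base => simp
  | succ n hn ih =>
    intro f hf
    simp only [Submodule.mem_iInf, Finset.mem_Icc] at hf
    have hf_top := hf (n + 1) ⟨by omega, le_rfl⟩
    rw [show n + 1 + 1 - (n + 1) = 1 by omega, pow_one] at hf_top
    obtain ⟨a, b, rfl⟩ := mem_span_pair.mp hf_top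
    have ha : a ∈ span {x, y} ^ n := by
      refine ih <| (Submodule.mem_iInf _).mpr fun i => (Submodule.mem_iInf _).mpr fun hi => ?_
      rw [Finset.mem_Icc] at hi
      refine mem_span_pair_of_mul_mem (hreg i) ?_
      have hyi : b * y ^ (n + 1) ∈ span {x ^ (n + 1 - i + 1), y ^ i} :=
        mul_mem_left _ b (span_mono (Set.subset_insert _ _)
          (mem_span_singleton.mpr (pow_dvd_pow y (by omega))))
      have hfi := hf i ⟨hi.1, by omega⟩
      rw [show n + 1 + 1 - i = n + 1 - i + 1 by omega] at hfi
      simpa [mul_comm] using sub_mem hfi hyi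
    rw [pow_succ]
    exact add_mem (mul_mem_mul ha (subset_span (by simp)))
      (mul_mem_left _ _ (pow_succ (span {x, y}) n ▸ pow_mem_pow (subset_span (by simp)) _))

theorem stmt_2 (R : Type*) [CommRing R] [IsDomain R] [IsNoetherianRing R] [IsLocalRing R]
    (hdim : ringKrullDim R = 2) (x y : R)
    (hm : maximalIdeal R = Ideal.span {x, y})
    (m : ℕ) (hm2 : 2 ≤ m) :
    ⨅ i ∈ Finset.Icc 1 (m - 1), (Ideal.span {x ^ (m - i), y ^ i} : Ideal R)
      = maximalIdeal R ^ (m - 1) := by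
  have hdim_gt : 1 < ringKrullDim R := by rw [hdim]; norm_num
  have hm' : maximalIdeal R = Ideal.span {y, x} := by rw [hm, Set.pair_comm]
  have hy : y ∈ nonZeroDivisors R := mem_nonZeroDivisors_of_ne_zero fun hy0 =>
    pow_notMem_span_singleton hdim_gt hm' 1 (by simp [hy0])
  have hreg (i : ℕ) (c : R) : x * c ∈ Ideal.span {y ^ i} → c ∈ Ideal.span {y ^ i} :=
    Ideal.mem_span_singleton_pow_of_mul_mem hy
      (fun _ => mem_span_singleton_of_mul_mem hm (pow_notMem_span_singleton hdim_gt hm)) i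
  obtain ⟨n, rfl⟩ : ∃ n, m = n + 1 := ⟨m - 1, by omega⟩
  rw [hm, Nat.add_sub_cancel]
  exact le_antisymm (Ideal.iInf_span_pow_pair_le_span_pair_pow hreg (by omega))
    (Ideal.span_pair_pow_le_iInf x y n)
end

section
/- Let S = k[[x, y, z]] be a formal power series ring over a field k, with maximal ideal n = (x, y, z). Let f ∈ n^2 \ n^3 and R = S/(f) with maximal ideal m. Suppose a, b ∈ m satisfy m^2 = (a, b)m. Then for every integer ℓ > 0, setting I = m^ℓ and Q = (a^ℓ, b^ℓ), one has I^2 = QI. -/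
/-!
Iterating `m ^ 2 = (a, b) m` gives `m ^ (2ℓ) = (a, b) ^ (2ℓ - 1) m`. Every monomial `a ^ i b ^ j`
of degree `2ℓ - 1` has `i ≥ ℓ` or `j ≥ ℓ`, so `(a, b) ^ (2ℓ - 1) = (a ^ ℓ, b ^ ℓ) (a, b) ^ (ℓ - 1)`,
and `(a, b) ^ (ℓ - 1) m = m ^ ℓ` by the first step again.
-/

open IsLocalRing

theorem pow_succ_eq_pow_mul_of_sq_eq_mul {M : Type*} [CommMonoid M] {x q : M}
    (h : x ^ 2 = q * x) (n : ℕ) : x ^ (n + 1) = q ^ n * x := by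
  induction n with
  | zero => simp
  | succ n ih => rw [pow_succ, ih, mul_assoc, ← sq, h, ← mul_assoc, ← pow_succ]

namespace Ideal

variable {R : Type*} [CommSemiring R]

theorem pow_mul_pow_le_sup_pow (I J : Ideal R) (p q : ℕ) : I ^ p * J ^ q ≤ (I ⊔ J) ^ (p + q) :=
  pow_add (I ⊔ J) p q ▸ mul_mono (pow_right_mono le_sup_left p) (pow_right_mono le_sup_right q)

theorem sup_pow_add_add_one_le_s6 (I J : Ideal R) (n m : ℕ) :
    (I ⊔ J) ^ (n + m + 1) ≤ I ^ (n + 1) * (I ⊔ J) ^ m ⊔ J ^ (m + 1) * (I ⊔ J) ^ n := by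
  conv_lhs => rw [← add_eq_sup, add_pow, sum_eq_sup]
  refine Finset.sup_le fun i hi => mul_le_left.trans ?_
  rw [Finset.mem_range] at hi
  by_cases hni : n + 1 ≤ i
  · obtain ⟨c, rfl⟩ := Nat.exists_eq_add_of_le hni
    refine le_sup_of_le_left ?_
    rw [pow_add, mul_assoc]
    exact mul_mono_right <| (pow_mul_pow_le_sup_pow I J _ _).trans_eq (by congr 1; omega)
  · obtain ⟨c, hc⟩ := Nat.exists_eq_add_of_le (show m + 1 ≤ n + m + 1 - i by omega)
    refine le_sup_of_le_right ?_
    rw [hc, pow_add, mul_left_comm]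
    exact mul_mono_right <| (pow_mul_pow_le_sup_pow I J _ _).trans_eq (by congr 1; omega)

theorem span_pair_pow_two_mul_add_one (a b : R) (n : ℕ) :
    span {a, b} ^ (2 * n + 1) = span {a ^ (n + 1), b ^ (n + 1)} * span {a, b} ^ n := by
  apply le_antisymm
  · have := sup_pow_add_add_one_le_s6 (span {a}) (span {b}) n n
    rwa [← span_insert, span_singleton_pow, span_singleton_pow, ← sup_mul, ← span_insert,
      ← two_mul] at this
  · calc span {a ^ (n + 1), b ^ (n + 1)} * span {a, b} ^ n
        ≤ span {a, b} ^ (n + 1) * span {a, b} ^ n := by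
          refine mul_mono_left (span_le.2 ?_)
          rintro x (rfl | rfl | _) <;> apply pow_mem_pow <;> apply subset_span <;> simp_all
      _ = span {a, b} ^ (2 * n + 1) := by rw [← pow_add]; congr 1; omega

end Ideal

theorem stmt_6_general
    (R : Type*) [CommRing R]
    (m : Ideal R)
    (a b : R)
    (hab : m ^ 2 = Ideal.span {a, b} * m)
    (ℓ : ℕ) (hℓ : 0 < ℓ) :
    (m ^ ℓ) ^ 2 = Ideal.span {a ^ ℓ, b ^ ℓ} * m ^ ℓ := by
  obtain ⟨n, rfl⟩ := Nat.exists_eq_succ_of_ne_zero hℓ.ne'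
  calc (m ^ (n + 1)) ^ 2 = m ^ (2 * n + 1 + 1) := by rw [← pow_mul]; ring_nf
    _ = Ideal.span {a, b} ^ (2 * n + 1) * m := pow_succ_eq_pow_mul_of_sq_eq_mul hab _
    _ = Ideal.span {a ^ (n + 1), b ^ (n + 1)} * (Ideal.span {a, b} ^ n * m) := by
      rw [Ideal.span_pair_pow_two_mul_add_one, mul_assoc]
    _ = Ideal.span {a ^ (n + 1), b ^ (n + 1)} * m ^ (n + 1) := by
      rw [pow_succ_eq_pow_mul_of_sq_eq_mul hab]

theorem stmt_6 (k : Type*) [Field k]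
    (f : MvPowerSeries (Fin 3) k)
    (hf2 : f ∈ maximalIdeal (MvPowerSeries (Fin 3) k) ^ 2)
    (hf3 : f ∉ maximalIdeal (MvPowerSeries (Fin 3) k) ^ 3)
    (R : Type*) [CommRing R] (π : MvPowerSeries (Fin 3) k →+* R)
    (hπ : Function.Surjective π)
    (hker : RingHom.ker π = Ideal.span {f})
    (m : Ideal R)
    (hmR : m = (maximalIdeal (MvPowerSeries (Fin 3) k)).map π)
    (a b : R) (ha : a ∈ m) (hb : b ∈ m)
    (hab : m ^ 2 = Ideal.span {a, b} * m)
    (ℓ : ℕ) (hℓ : 0 < ℓ) :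
    (m ^ ℓ) ^ 2 = Ideal.span {a ^ ℓ, b ^ ℓ} * m ^ ℓ :=
  stmt_6_general R m a b hab ℓ hℓ
end

section
/- Let (R, m) be a Gorenstein local ring of dimension 2 and I an m-primary ideal containing a parameter ideal Q = (a, b) such that I^2 = QI. Then for all n ≥ 0, Q^n ∩ (Q^{n+1} : I) = Q^n (Q : I). -/
/-!
Since `u, v` is a regular sequence and `(a, b)` is `𝔪`-primary, some powers `uⁱ, vʲ` lie in
`(a, b)`, and powers of a regular sequence are regular. If `a z = 0`, expanding `uⁱ, vʲ` in
`a, b` shows `z ∈ b · ann a`; so `ann a = b · ann a` vanishes by Nakayama, and then `b` is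
regular modulo `a` because `(a) : (uⁱ, vʲ) = (a)`. For the regular sequence `a, b`, write
`Q^(m+1) = a Q^m + (b^(m+1))`: comparing the two expressions of `a w + c bᵐ ∈ Q^(m+1)` gives
`c ∈ Q` and `w ∈ Q^m`. Induction on `n` then yields `Q^n ∩ (Q^(n+1) : S) = Q^n (Q : S)` for
every set `S`.
-/

open IsLocalRing

/-- A Noetherian local ring is a two-dimensional Gorenstein local ring if it has Krull
dimension two, some system of parameters `u, v` is a regular sequence (Cohen–Macaulayness),
and the socle of the corresponding Artinian reduction is one-dimensional. -/
def IsGorensteinLocalOfDimTwo (R : Type*) [CommRing R] [IsLocalRing R] : Prop :=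
  ringKrullDim R = 2 ∧
    ∃ u v s : R, u ∈ maximalIdeal R ∧ v ∈ maximalIdeal R ∧
      u ∈ nonZeroDivisors R ∧
      (∀ r : R, v * r ∈ Ideal.span {u} → r ∈ Ideal.span {u}) ∧
      (Ideal.span {u, v} : Ideal R).radical = maximalIdeal R ∧
      s ∉ (Ideal.span {u, v} : Ideal R) ∧
      Submodule.colon (Ideal.span {u, v} : Ideal R) (maximalIdeal R)
        = Ideal.span {u, v} ⊔ Ideal.span {s}

open RingTheory.Sequence

section

variable {R : Type*} [CommRing R]

theorem RingTheory.Sequence.isWeaklyRegular_pair_iff {a b : R} :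
    IsWeaklyRegular R [a, b] ↔
      IsSMulRegular R a ∧ IsSMulRegular (R ⧸ Ideal.span {a}) b := by
  rw [isWeaklyRegular_cons_iff, isWeaklyRegular_singleton_iff,
    isSMulRegular_quotient_iff_mem_of_smul_mem, isSMulRegular_quotient_iff_mem_of_smul_mem,
    ← Submodule.ideal_span_singleton_smul, smul_eq_mul, Ideal.mul_top]

theorem isSMulRegular_quotient_span_pow_s9 {u c : R} (hu : IsSMulRegular R u)
    (hc : IsSMulRegular (R ⧸ Ideal.span {u}) c) (i : ℕ) :
    IsSMulRegular (R ⧸ Ideal.span {u ^ i}) c := by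
  rw [isSMulRegular_quotient_iff_mem_of_smul_mem] at hc ⊢
  simp only [smul_eq_mul, Ideal.mem_span_singleton] at hc ⊢
  induction i with
  | zero => simp
  | succ i ih =>
    intro r ⟨d, hd⟩
    obtain ⟨r', rfl⟩ := hc r ⟨u ^ i * d, by rw [hd]; ring⟩
    obtain ⟨e, he⟩ := ih r' ⟨d, hu (by simp only [smul_eq_mul]; linear_combination hd)⟩
    exact ⟨e, by rw [he]; ring⟩

theorem RingTheory.Sequence.IsWeaklyRegular.pow_pair {u v : R}
    (h : IsWeaklyRegular R [u, v]) (i j : ℕ) : IsWeaklyRegular R [u ^ i, v ^ j] := by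
  rw [isWeaklyRegular_pair_iff] at h ⊢
  exact ⟨h.1.pow i, (isSMulRegular_quotient_span_pow_s9 h.1 h.2 i).pow j⟩

theorem mem_span_singleton_of_mul_mem_of_isWeaklyRegular {a u v z : R} (ha : IsSMulRegular R a)
    (huv : IsWeaklyRegular R [u, v]) (hu : u * z ∈ Ideal.span {a})
    (hv : v * z ∈ Ideal.span {a}) : z ∈ Ideal.span {a} := by
  rw [isWeaklyRegular_pair_iff, isSMulRegular_quotient_iff_mem_of_smul_mem] at huv
  simp only [smul_eq_mul, Ideal.mem_span_singleton] at huv hu hv ⊢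
  obtain ⟨s₁, hs₁⟩ := hu
  obtain ⟨s₂, hs₂⟩ := hv
  have hvs : v * s₁ = u * s₂ :=
    ha (by simp only [smul_eq_mul]; linear_combination u * hs₂ - v * hs₁)
  obtain ⟨t, rfl⟩ := huv.2 s₁ ⟨s₂, hvs⟩
  exact ⟨t, huv.1 (by simp only [smul_eq_mul]; linear_combination hs₁)⟩

theorem isSMulRegular_of_mem_span_pair [IsNoetherianRing R] {a b u v : R}
    (huv : IsWeaklyRegular R [u, v]) (hu : u ∈ Ideal.span {a, b})
    (hv : v ∈ Ideal.span {a, b}) (hb : b ∈ Ideal.jacobson ⊥) : IsSMulRegular R a := by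
  rw [isWeaklyRegular_pair_iff, isSMulRegular_quotient_iff_mem_of_smul_mem] at huv
  simp only [smul_eq_mul, Ideal.mem_span_singleton] at huv
  obtain ⟨α, β, hαβ⟩ := Ideal.mem_span_pair.mp hu
  obtain ⟨γ, δ, hγδ⟩ := Ideal.mem_span_pair.mp hv
  let N : Ideal R := (⊥ : Ideal R).colon {a}
  have mem_N {z : R} : z ∈ N ↔ a * z = 0 := by simp [N, Submodule.mem_colon, mul_comm]
  have hN : N ≤ Ideal.span {b} • N := by
    intro z hz
    rw [mem_N] at hz
    obtain ⟨r, hr⟩ := huv.2 (β * z) ⟨δ * z, by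
      linear_combination (-β * z) * hγδ + (δ * z) * hαβ + (β * γ - α * δ) * hz⟩
    have hzr : z = b * r :=
      huv.1 (by simp only [smul_eq_mul]; linear_combination (-z) * hαβ + b * hr + α * hz)
    have hr : r ∈ N :=
      mem_N.mpr (huv.1 (by simp only [smul_eq_mul]; linear_combination (-a) * hr + β * hz))
    rw [hzr]
    exact Submodule.smul_mem_smul (Ideal.mem_span_singleton_self b) hr
  have hN0 := Submodule.eq_bot_of_le_smul_of_le_jacobson_bot _ N (IsNoetherian.noetherian N) hN
    ((Ideal.span_singleton_le_iff_mem _).mpr hb)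
  refine isSMulRegular_iff_right_eq_zero_of_smul.mpr fun z hz => ?_
  simpa [hN0] using mem_N.mpr hz

theorem isWeaklyRegular_of_mem_radical_span_pair [IsNoetherianRing R] {a b u v : R}
    (huv : IsWeaklyRegular R [u, v]) (hu : u ∈ (Ideal.span {a, b}).radical)
    (hv : v ∈ (Ideal.span {a, b}).radical) (hb : b ∈ Ideal.jacobson ⊥) :
    IsWeaklyRegular R [a, b] := by
  obtain ⟨i, hi⟩ := hu
  obtain ⟨j, hj⟩ := hv
  have huv' := huv.pow_pair i j
  have ha := isSMulRegular_of_mem_span_pair huv' hi hj hb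
  have mul_mem {x r : R} (hx : x ∈ Ideal.span {a, b}) (hr : b * r ∈ Ideal.span {a}) :
      x * r ∈ Ideal.span {a} := by
    obtain ⟨α, β, rfl⟩ := Ideal.mem_span_pair.mp hx
    rw [add_mul, mul_assoc, mul_assoc]
    exact add_mem
      (Ideal.mul_mem_left _ _ (Ideal.mul_mem_right _ _ (Ideal.mem_span_singleton_self a)))
      (Ideal.mul_mem_left _ _ hr)
  refine isWeaklyRegular_pair_iff.mpr ⟨ha, (isSMulRegular_quotient_iff_mem_of_smul_mem _ _).mpr
    fun r hr => mem_span_singleton_of_mul_mem_of_isWeaklyRegular ha huv'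
      (mul_mem hi hr) (mul_mem hj hr)⟩

theorem Ideal.span_pair_pow_succ (a b : R) (n : ℕ) :
    span {a, b} ^ (n + 1) = span {a} * span {a, b} ^ n ⊔ span {b ^ (n + 1)} := by
  induction n with
  | zero =>
    rw [zero_add, pow_one, pow_one, pow_zero, one_eq_top, mul_top, span_insert]
  | succ n ih =>
    have hb : span {a, b} * span {b ^ (n + 1)} =
        span {a} * span {b ^ (n + 1)} ⊔ span {b ^ (n + 1 + 1)} := by
      rw [span_insert, sup_mul,
        span_singleton_mul_span_singleton b, ← pow_succ']
    have hB : span {b ^ (n + 1)} ≤ span {a, b} ^ (n + 1) :=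
      (span_singleton_le_iff_mem _).mpr
        (pow_mem_pow (subset_span (by simp : b ∈ ({a, b} : Set R))) _)
    conv_lhs => rw [pow_succ', ih, mul_sup, mul_left_comm, ← pow_succ', hb, ← sup_assoc,
      sup_eq_left.mpr (mul_mono_right hB)]

theorem Ideal.mul_colon_le_colon_mul (I J : Ideal R) (S : Set R) :
    I * J.colon S ≤ (I * J).colon S :=
  Ideal.mul_le.mpr fun i hi k hk => Submodule.mem_colon.mpr fun p hp => by
    rw [smul_eq_mul, mul_assoc]
    exact Ideal.mul_mem_mul hi (Submodule.mem_colon.mp hk p hp)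

namespace RingTheory.Sequence.IsWeaklyRegular

variable {a b : R} (hab : IsWeaklyRegular R [a, b])
include hab

theorem mem_span_pair_of_mul_add_mul_pow_mem {w c : R} {m : ℕ}
    (h : a * w + c * b ^ m ∈ Ideal.span {a, b} ^ (m + 1)) :
    c ∈ Ideal.span {a, b} ∧ w ∈ Ideal.span {a, b} ^ m := by
  obtain ⟨ha, hb⟩ := isWeaklyRegular_pair_iff.mp hab
  rw [Ideal.span_pair_pow_succ, Submodule.mem_sup] at h
  obtain ⟨_, hy, _, hz, hyz⟩ := h
  obtain ⟨w', hw', rfl⟩ := Ideal.mem_span_singleton_mul.mp hy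
  obtain ⟨d, rfl⟩ := Ideal.mem_span_singleton'.mp hz
  have hcd : c - d * b ∈ Ideal.span {a} := mem_of_isSMulRegular_quotient_of_smul_mem (hb.pow m)
    (Ideal.mem_span_singleton'.mpr ⟨w' - w, by rw [smul_eq_mul]; linear_combination hyz⟩)
  obtain ⟨e, he⟩ := Ideal.mem_span_singleton'.mp hcd
  have hw : w = w' - e * b ^ m :=
    ha (by simp only [smul_eq_mul]; linear_combination -hyz + b ^ m * he)
  refine ⟨Ideal.mem_span_pair.mpr ⟨e, d, by linear_combination he⟩, hw ▸ sub_mem hw' ?_⟩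
  exact Ideal.mul_mem_left _ _ (Ideal.pow_mem_pow (Ideal.subset_span (by simp)) m)

theorem pow_inf_colon_pow_succ_le (S : Set R) (n : ℕ) :
    Ideal.span {a, b} ^ n ⊓ (Ideal.span {a, b} ^ (n + 1)).colon S ≤
      Ideal.span {a, b} ^ n * (Ideal.span {a, b}).colon S := by
  induction n with
  | zero =>
    rw [pow_zero, Ideal.one_eq_top, top_inf_eq, Ideal.top_mul, zero_add, pow_one]
  | succ n ih =>
    intro y hy
    obtain ⟨hyQ, hyS⟩ := Submodule.mem_inf.mp hy
    rw [Ideal.span_pair_pow_succ, Submodule.mem_sup] at hyQ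
    obtain ⟨_, haw, _, hc, rfl⟩ := hyQ
    obtain ⟨w, hw, rfl⟩ := Ideal.mem_span_singleton_mul.mp haw
    obtain ⟨c, rfl⟩ := Ideal.mem_span_singleton'.mp hc
    have hS (p : R) (hp : p ∈ S) :=
      hab.mem_span_pair_of_mul_add_mul_pow_mem (w := w * p) (c := c * p) (m := n + 1) <| by
        convert Submodule.mem_colon.mp hyS p hp using 1
        rw [smul_eq_mul]
        ring
    have hc : c ∈ (Ideal.span {a, b}).colon S :=
      Submodule.mem_colon.mpr fun p hp => by simpa only [smul_eq_mul] using (hS p hp).1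
    have hw : w ∈ Ideal.span {a, b} ^ n * (Ideal.span {a, b}).colon S :=
      ih ⟨hw, Submodule.mem_colon.mpr fun p hp => by simpa only [smul_eq_mul] using (hS p hp).2⟩
    refine add_mem ?_ ?_
    · rw [pow_succ', mul_assoc]
      exact Ideal.mul_mem_mul (Ideal.subset_span (by simp)) hw
    · rw [mul_comm c]
      exact Ideal.mul_mem_mul (Ideal.pow_mem_pow (Ideal.subset_span (by simp)) _) hc

theorem pow_inf_colon_pow_succ (S : Set R) (n : ℕ) :
    Ideal.span {a, b} ^ n ⊓ (Ideal.span {a, b} ^ (n + 1)).colon S =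
      Ideal.span {a, b} ^ n * (Ideal.span {a, b}).colon S := by
  refine le_antisymm (hab.pow_inf_colon_pow_succ_le S n) (le_inf Ideal.mul_le_left ?_)
  rw [pow_succ]
  exact Ideal.mul_colon_le_colon_mul _ _ S

end RingTheory.Sequence.IsWeaklyRegular

end

theorem stmt_9_general (R : Type*) [CommRing R] [IsNoetherianRing R] [IsLocalRing R]
    (hGor : IsGorensteinLocalOfDimTwo R)
    (I : Ideal R)
    (a b : R)
    (hQ : (Ideal.span {a, b} : Ideal R).radical = maximalIdeal R) :
    ∀ n : ℕ, (Ideal.span {a, b} : Ideal R) ^ n ⊓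
        Submodule.colon ((Ideal.span {a, b} : Ideal R) ^ (n + 1)) I
      = (Ideal.span {a, b} : Ideal R) ^ n *
          Submodule.colon (Ideal.span {a, b} : Ideal R) I := by
  obtain ⟨-, u, v, -, hum, hvm, hu, huv, -⟩ := hGor
  have hreg : IsWeaklyRegular R [u, v] := isWeaklyRegular_pair_iff.mpr
    ⟨(isRegular_iff_mem_nonZeroDivisors.mpr hu).left,
      (isSMulRegular_quotient_iff_mem_of_smul_mem _ _).mpr huv⟩
  have hb : b ∈ Ideal.jacobson ⊥ :=
    maximalIdeal_le_jacobson _ (hQ ▸ Ideal.le_radical (Ideal.subset_span (by simp)))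
  have hab : IsWeaklyRegular R [a, b] :=
    isWeaklyRegular_of_mem_radical_span_pair hreg (hQ ▸ hum) (hQ ▸ hvm) hb
  exact hab.pow_inf_colon_pow_succ I

theorem stmt_9 (R : Type*) [CommRing R] [IsNoetherianRing R] [IsLocalRing R]
    (hGor : IsGorensteinLocalOfDimTwo R)
    (I : Ideal R) (hI : I.radical = maximalIdeal R)
    (a b : R) (hQI : Ideal.span {a, b} ≤ I)
    (hQ : (Ideal.span {a, b} : Ideal R).radical = maximalIdeal R)
    (hred : I ^ 2 = Ideal.span {a, b} * I) :
    ∀ n : ℕ, (Ideal.span {a, b} : Ideal R) ^ n ⊓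
        Submodule.colon ((Ideal.span {a, b} : Ideal R) ^ (n + 1)) I
      = (Ideal.span {a, b} : Ideal R) ^ n *
          Submodule.colon (Ideal.span {a, b} : Ideal R) I :=
  stmt_9_general R hGor I a b hQ
end

section
/- Let (R, m) be a two-dimensional regular local ring with m = (x, y). Let 1 < m ≤ n be integers and set I = (x^m) + m^n, Q = (x^m, y^n), J = m^{m-1}, f = x, g = x^m, h = y^{m-1}. Then m·J = f·J + m·h and I·J = I·h + g·J. -/
/-! Write `M = (x) + (y)`. Every monomial generator `x^i y^j` of `M^(a+b)` has `i ≥ a` or `j ≥ b`,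
so `M^(a+b) ≤ x^a M^b + M^a y^b`. With `a = 1` this is the first equality; with `a = n` and
`x^n ∈ (x^m)` it gives the second. -/

namespace Ideal

variable {R : Type*} [CommSemiring R]

theorem sup_pow_add_le (I J : Ideal R) :
    ∀ a b : ℕ, (I ⊔ J) ^ (a + b) ≤ I ^ a * (I ⊔ J) ^ b ⊔ (I ⊔ J) ^ a * J ^ b
  | 0, b => by simp
  | a + 1, 0 => by simp
  | a + 1, b + 1 => by
    have hI : I ≤ I ⊔ J := le_sup_left
    have hJ : J ≤ I ⊔ J := le_sup_right
    calc (I ⊔ J) ^ (a + 1 + (b + 1))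
        = I * (I ⊔ J) ^ (a + (b + 1)) ⊔ J * (I ⊔ J) ^ (a + 1 + b) := by
          rw [show a + 1 + b = a + (b + 1) by omega, ← sup_mul, ← pow_succ', Nat.add_right_comm]
      _ ≤ I * (I ^ a * (I ⊔ J) ^ (b + 1) ⊔ (I ⊔ J) ^ a * J ^ (b + 1)) ⊔
            J * (I ^ (a + 1) * (I ⊔ J) ^ b ⊔ (I ⊔ J) ^ (a + 1) * J ^ b) :=
          sup_le_sup (mul_mono_right (sup_pow_add_le I J a (b + 1)))
            (mul_mono_right (sup_pow_add_le I J (a + 1) b))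
      _ ≤ I ^ (a + 1) * (I ⊔ J) ^ (b + 1) ⊔ (I ⊔ J) ^ (a + 1) * J ^ (b + 1) := by
          simp only [mul_sup]
          refine sup_le (sup_le (le_sup_of_le_left ?_) (le_sup_of_le_right ?_))
            (sup_le (le_sup_of_le_left ?_) (le_sup_of_le_right ?_))
          · rw [← mul_assoc, ← pow_succ']
          · calc I * ((I ⊔ J) ^ a * J ^ (b + 1)) ≤ (I ⊔ J) * ((I ⊔ J) ^ a * J ^ (b + 1)) :=
                  mul_mono_left hI
              _ = _ := by ring
          · calc J * (I ^ (a + 1) * (I ⊔ J) ^ b) ≤ (I ⊔ J) * (I ^ (a + 1) * (I ⊔ J) ^ b) :=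
                  mul_mono_left hJ
              _ = _ := by ring
          · rw [mul_left_comm, ← pow_succ']

theorem sup_mul_sup_pow (I J : Ideal R) (k : ℕ) :
    (I ⊔ J) * (I ⊔ J) ^ k = I * (I ⊔ J) ^ k ⊔ (I ⊔ J) * J ^ k := by
  refine le_antisymm ?_ (sup_le (mul_mono_left le_sup_left)
    (mul_mono_right (pow_right_mono le_sup_right k)))
  simpa [← pow_succ', add_comm k 1] using sup_pow_add_le I J 1 k

theorem pow_sup_sup_pow_mul_sup_pow {I J : Ideal R} {m n : ℕ} (hmn : m ≤ n) (k : ℕ) :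
    (I ^ m ⊔ (I ⊔ J) ^ n) * (I ⊔ J) ^ k =
      (I ^ m ⊔ (I ⊔ J) ^ n) * J ^ k ⊔ I ^ m * (I ⊔ J) ^ k := by
  refine le_antisymm ?_ (sup_le (mul_mono_right (pow_right_mono le_sup_right k))
    (mul_mono_left le_sup_left))
  rw [sup_mul, ← pow_add]
  refine sup_le le_sup_right ((sup_pow_add_le I J n k).trans (sup_le ?_ ?_))
  · exact le_sup_of_le_right (mul_mono_left (pow_le_pow_right hmn))
  · exact le_sup_of_le_left (mul_mono_left le_sup_right)

end Ideal

open IsLocalRing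

theorem stmt_11_general (R : Type*) [CommRing R] [IsLocalRing R]
    (x y : R)
    (hm : maximalIdeal R = Ideal.span {x, y})
    (m n : ℕ) (hmn : m ≤ n)
    (I J : Ideal R) (hI : I = Ideal.span {x ^ m} ⊔ maximalIdeal R ^ n)
    (hJ : J = maximalIdeal R ^ (m - 1)) :
    maximalIdeal R * J = Ideal.span {x} * J ⊔ maximalIdeal R * Ideal.span {y ^ (m - 1)} ∧
    I * J = I * Ideal.span {y ^ (m - 1)} ⊔ Ideal.span {x ^ m} * J := by
  have hmax : maximalIdeal R = Ideal.span {x} ⊔ Ideal.span {y} := by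
    rw [hm, Ideal.span_insert]
  subst hI hJ
  rw [hmax, ← Ideal.span_singleton_pow, ← Ideal.span_singleton_pow]
  exact ⟨Ideal.sup_mul_sup_pow _ _ _, Ideal.pow_sup_sup_pow_mul_sup_pow hmn _⟩

theorem stmt_11 (R : Type*) [CommRing R] [IsDomain R] [IsNoetherianRing R] [IsLocalRing R]
    (hdim : ringKrullDim R = 2) (x y : R)
    (hm : maximalIdeal R = Ideal.span {x, y})
    (m n : ℕ) (hm1 : 1 < m) (hmn : m ≤ n)
    (I J : Ideal R) (hI : I = Ideal.span {x ^ m} ⊔ maximalIdeal R ^ n)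
    (hJ : J = maximalIdeal R ^ (m - 1)) :
    maximalIdeal R * J = Ideal.span {x} * J ⊔ maximalIdeal R * Ideal.span {y ^ (m - 1)} ∧
    I * J = I * Ideal.span {y ^ (m - 1)} ⊔ Ideal.span {x ^ m} * J :=
  stmt_11_general R x y hm m n hmn I J hI hJ
end

section
/- Let R = k[[x, y, z]] be a formal power series ring over a field k, I = (x^2 y, y^2 z, z^2 x, x y z), and Q = (x^2 y, y^2 z, z^2 x). Then I^3 = Q I^2, while I^2 ≠ Q I. -/
/-!
Since `I = Q + (xyz)` and `(xyz)³ = x²y · y²z · z²x ∈ Q I²`, expanding `I³ = (Q + (xyz))³` gives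
`I³ = Q I²`. On the other hand `(xyz)² ∈ I²`, but every product of a generator of `Q` with a
generator of `I` has some exponent `≥ 3`, so none divides `x²y²z²`; hence the coefficient of
`x²y²z²` vanishes on all of `Q I` and `(xyz)² ∉ Q I`.
-/
open MvPowerSeries Finsupp

namespace MvPowerSeries
variable {σ R : Type*} [CommSemiring R]

theorem coeff_eq_zero_of_mem_span_monomial {p : σ →₀ ℕ} {S : Set (MvPowerSeries σ R)}
    (hS : S ⊆ (monomial · 1) '' {e | ¬ e ≤ p}) {f : MvPowerSeries σ R}
    (hf : f ∈ Ideal.span S) : coeff p f = 0 := by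
  classical
  suffices ∀ q ≤ p, coeff q f = 0 from this p le_rfl
  induction hf using Submodule.span_induction with
  | mem _ h =>
    obtain ⟨e, he, rfl⟩ := hS h
    intro q hq
    exact coeff_monomial_ne (by rintro rfl; exact he hq) 1
  | zero => simp
  | add _ _ _ _ hf hg => intro q hq; simp [hf q hq, hg q hq]
  | smul r f _ hf =>
    intro q hq
    rw [smul_eq_mul, coeff_mul]
    refine Finset.sum_eq_zero fun uv huv => ?_
    rw [Finset.HasAntidiagonal.mem_antidiagonal] at huv
    rw [hf uv.2 ((le_add_self.trans_eq huv).trans hq), mul_zero]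

end MvPowerSeries

namespace Ideal
variable {R : Type*} [CommSemiring R]

theorem sup_pow_succ_le (Q J : Ideal R) (n : ℕ) :
    (Q ⊔ J) ^ (n + 1) ≤ Q * (Q ⊔ J) ^ n ⊔ J ^ (n + 1) := by
  induction n with
  | zero => simp
  | succ n ih =>
    calc (Q ⊔ J) ^ (n + 2) = (Q ⊔ J) * (Q ⊔ J) ^ (n + 1) := pow_succ' _ _
      _ ≤ (Q ⊔ J) * (Q * (Q ⊔ J) ^ n ⊔ J ^ (n + 1)) := mul_mono_right ih
      _ = Q * (Q ⊔ J) ^ (n + 1) ⊔ Q * J ^ (n + 1) ⊔ J ^ (n + 2) := by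
        rw [mul_sup, mul_left_comm, ← pow_succ', sup_mul, ← pow_succ', sup_assoc]
      _ ≤ Q * (Q ⊔ J) ^ (n + 1) ⊔ J ^ (n + 2) := by
        gcongr
        exact sup_le le_rfl (mul_mono_right (pow_right_mono le_sup_right _))

theorem pow_succ_eq_mul_pow_of_eq_sup {I Q J : Ideal R} {n : ℕ} (hI : I = Q ⊔ J)
    (hJ : J ^ (n + 1) ≤ Q * I ^ n) : I ^ (n + 1) = Q * I ^ n := by
  refine le_antisymm ?_ ?_
  · calc I ^ (n + 1) ≤ Q * I ^ n ⊔ J ^ (n + 1) := hI ▸ sup_pow_succ_le Q J n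
      _ ≤ Q * I ^ n := sup_le le_rfl hJ
  · calc Q * I ^ n ≤ I * I ^ n := mul_mono_left (hI ▸ le_sup_left)
      _ = I ^ (n + 1) := (pow_succ' I n).symm

end Ideal

theorem sq_X_mul_X_mul_X_notMem_span_mul_span (R : Type*) [CommSemiring R] [Nontrivial R] :
    (X 0 * X 1 * X 2) ^ 2 ∉
      (Ideal.span {X 0 ^ 2 * X 1, X 1 ^ 2 * X 2, X 2 ^ 2 * X 0} *
        Ideal.span {X 0 ^ 2 * X 1, X 1 ^ 2 * X 2, X 2 ^ 2 * X 0, X 0 * X 1 * X 2} :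
          Ideal (MvPowerSeries (Fin 3) R)) := by
  rw [Ideal.span_mul_span']
  intro h
  have := coeff_eq_zero_of_mem_span_monomial (p := single 0 2 + single 1 2 + single 2 2) ?_ h
  · simp [mul_pow, X_pow_eq, monomial_mul_monomial] at this
  · rintro _ ⟨a, ha, b, hb, rfl⟩
    simp only [Set.mem_insert_iff, Set.mem_singleton_iff] at ha hb
    -- `X_pow_eq` has to fire before `X_def` unfolds the bases of the powers.
    rcases ha with rfl | rfl | rfl <;> rcases hb with rfl | rfl | rfl | rfl <;>
      simp only [X_pow_eq] <;> simp only [X_def, monomial_mul_monomial, mul_one] <;>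
      exact ⟨_, by simp [Finsupp.le_def, Fin.forall_fin_succ], rfl⟩

theorem stmt_15 (k : Type*) [Field k]
    (x y z : MvPowerSeries (Fin 3) k)
    (hx : x = MvPowerSeries.X 0) (hy : y = MvPowerSeries.X 1) (hz : z = MvPowerSeries.X 2)
    (I Q : Ideal (MvPowerSeries (Fin 3) k))
    (hI : I = Ideal.span {x ^ 2 * y, y ^ 2 * z, z ^ 2 * x, x * y * z})
    (hQ : Q = Ideal.span {x ^ 2 * y, y ^ 2 * z, z ^ 2 * x}) :
    I ^ 3 = Q * I ^ 2 ∧ I ^ 2 ≠ Q * I := by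
  subst hx hy hz hI hQ
  refine ⟨Ideal.pow_succ_eq_mul_pow_of_eq_sup (J := Ideal.span {X 0 * X 1 * X 2}) ?_ ?_,
    fun h => ?_⟩
  · rw [← Ideal.span_union, Set.insert_union, Set.insert_union, Set.singleton_union]
  · rw [Ideal.span_singleton_pow, Ideal.span_singleton_le_iff_mem,
      show (X 0 * X 1 * X 2 : MvPowerSeries (Fin 3) k) ^ 3 =
        X 0 ^ 2 * X 1 * ((X 1 ^ 2 * X 2) * (X 2 ^ 2 * X 0)) by ring,
      sq (Ideal.span _)]
    exact Ideal.mul_mem_mul (Ideal.subset_span (by simp))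
      (Ideal.mul_mem_mul (Ideal.subset_span (by simp)) (Ideal.subset_span (by simp)))
  · exact sq_X_mul_X_mul_X_notMem_span_mul_span k
      (h ▸ Ideal.pow_mem_pow (Ideal.subset_span (by simp)) 2)
end

section
/- Let (R, m) be a two-dimensional regular local ring and Q = (a, b) a parameter ideal with Q ⊆ m^2. Then the socle ideal I = Q : m satisfies I^2 = QI. -/
/-!
Write `a = α x + β y` and `b = γ x + δ y` with `α, β, γ, δ ∈ m` (possible as `Q ⊆ m²`) and
let `Δ = α δ - β γ`. By Krull's principal ideal theorem `y` is not nilpotent modulo `x`, and since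
the maximal ideal of `R ⧸ (x)` is principal this makes `y` a nonzerodivisor modulo `x`. Hence
`m ∉ Ass (R ⧸ (θ))` for every `θ`, so every `m`-primary pair, `(x, y)` as well as `(a, b)`, has
only Koszul relations. Comparing the relations of `(a, b)` coming from `f x, f y ∈ Q` gives
`Q : m = Q + (Δ)`. As `Δ m ⊆ m Q`, both `Δ² ∈ Q` and `Δ² m ⊆ Q²`; writing `Δ² = u a + v b`, the
Koszul relations then force `u, v ∈ Q : m`, so `Δ² ∈ Q I` and `I² = Q I`.
-/

open IsLocalRing Ideal

section CommRing

variable {R : Type*} [CommRing R]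

lemma Ideal.mem_colon_span_pair {I : Ideal R} {x y r : R} :
    r ∈ I.colon (span {x, y} : Ideal R) ↔ r * x ∈ I ∧ r * y ∈ I := by
  simp [Submodule.mem_colon]

lemma Ideal.mem_mul_span_pair {I : Ideal R} {x y z : R} :
    z ∈ I * span {x, y} ↔ ∃ p ∈ I, ∃ q ∈ I, p * x + q * y = z := by
  rw [span_insert, Ideal.mul_sup, Submodule.mem_sup]
  simp only [mem_mul_span_singleton]
  constructor
  · rintro ⟨_, ⟨p, hp, rfl⟩, _, ⟨q, hq, rfl⟩, rfl⟩
    exact ⟨p, hp, q, hq, rfl⟩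
  · rintro ⟨p, hp, q, hq, rfl⟩
    exact ⟨_, ⟨p, hp, rfl⟩, _, ⟨q, hq, rfl⟩, rfl⟩

lemma Ideal.sq_eq_mul_of_eq_sup_span_singleton {Q I : Ideal R} {z : R}
    (hI : I = Q ⊔ span {z}) (hz : z ^ 2 ∈ Q * I) : I ^ 2 = Q * I := by
  subst hI
  refine le_antisymm ?_ (sq (Q ⊔ span {z}) ▸ mul_mono_left le_sup_left)
  have hzz : span {z} * span {z} ≤ Q * (Q ⊔ span {z}) := by
    rwa [span_singleton_mul_span_singleton, span_singleton_le_iff_mem, ← sq]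
  rw [sq, sup_mul, mul_sup (span {z})]
  exact sup_le le_rfl (sup_le (mul_comm Q _ ▸ mul_mono_right le_sup_right) hzz)

lemma det_mem_colon {x y a b α β γ δ : R} (ha : a = α * x + β * y) (hb : b = γ * x + δ * y) :
    α * δ - β * γ ∈ (span {a, b}).colon (span {x, y} : Ideal R) :=
  mem_colon_span_pair.mpr
    ⟨mem_span_pair.mpr ⟨δ, -β, by rw [ha, hb]; ring⟩,
      mem_span_pair.mpr ⟨-γ, α, by rw [ha, hb]; ring⟩⟩

end CommRing

section LocalRing

variable {S : Type*} [CommRing S] [IsNoetherianRing S] [IsLocalRing S]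

lemma IsLocalRing.eq_zero_of_mul_eq_zero_of_maximalIdeal_eq_span {t s : S}
    (hm : maximalIdeal S = span {t}) (ht : ¬IsNilpotent t) (hs : t * s = 0) : s = 0 := by
  have hmem_pow : ∀ j i (s : S), t ^ (i + 1) * s = 0 → s ∈ maximalIdeal S ^ j := by
    intro j
    induction j with
    | zero => simp
    | succ j ih =>
      intro i s hs
      have hsm : s ∈ maximalIdeal S := by
        by_contra hsu
        exact ht ⟨i + 1, ((notMem_maximalIdeal.mp hsu).mul_left_eq_zero).mp hs⟩
      obtain ⟨s', rfl⟩ := mem_span_singleton'.mp (hm ▸ hsm)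
      rw [pow_succ]
      exact mul_mem_mul (ih (i + 1) s' (by linear_combination hs))
        (hm ▸ mem_span_singleton_self t)
  have := mem_iInf.mpr fun j => hmem_pow j 0 s (by simpa using hs)
  rwa [iInf_pow_eq_bot_of_isLocalRing _ (maximalIdeal.isMaximal S).ne_top, mem_bot] at this

lemma radical_span_singleton_ne_maximalIdeal (hdim : 1 < ringKrullDim S) (c : S) :
    (span {c}).radical ≠ maximalIdeal S := by
  intro h
  have hmin : maximalIdeal S ∈ (span {c}).minimalPrimes := by
    rw [← radical_minimalPrimes, h, minimalPrimes_eq_subsingleton_self]; rfl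
  have := height_le_one_of_isPrincipal_of_mem_minimalPrimes _ _ hmin
  rw [← maximalIdeal_height_eq_ringKrullDim] at hdim
  exact (not_le.mpr hdim) (by exact_mod_cast this)

lemma left_ne_zero_of_radical_span_pair_eq_maximalIdeal (hdim : 1 < ringKrullDim S) {a b : S}
    (hQ : (span {a, b}).radical = maximalIdeal S) : a ≠ 0 := by
  rintro rfl
  exact radical_span_singleton_ne_maximalIdeal hdim b (by rwa [span_insert_zero] at hQ)

lemma mem_span_singleton_of_mul_mem (hdim : 1 < ringKrullDim S) {x y : S}
    (hm : maximalIdeal S = span {x, y}) {d : S} (hd : y * d ∈ span {x}) : d ∈ span {x} := by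
  have hxm : span {x} ≤ maximalIdeal S := hm ▸ span_mono (by simp)
  have : Nontrivial (S ⧸ span {x}) :=
    Ideal.Quotient.nontrivial_iff.mpr (ne_top_of_le_ne_top (maximalIdeal.isMaximal S).ne_top hxm)
  have : IsLocalRing (S ⧸ span {x}) := .of_surjective' _ Ideal.Quotient.mk_surjective
  set π := Ideal.Quotient.mk (span {x})
  have hmS : maximalIdeal (S ⧸ span {x}) = span {π y} := by
    rw [← map_maximalIdeal_of_surjective π Ideal.Quotient.mk_surjective, hm, map_span,
      Set.image_pair, Ideal.Quotient.eq_zero_iff_mem.mpr (mem_span_singleton_self x),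
      span_insert_zero]
  have hy : ¬IsNilpotent (π y) := by
    rintro ⟨n, hn⟩
    refine radical_span_singleton_ne_maximalIdeal hdim x (le_antisymm ?_ ?_)
    · exact (maximalIdeal.isMaximal S).isPrime.radical_le_iff.mpr hxm
    · rw [hm, span_le]
      rintro z (rfl | rfl)
      · exact le_radical (mem_span_singleton_self z)
      · exact ⟨n, Ideal.Quotient.eq_zero_iff_mem.mp (by rwa [map_pow])⟩
  rw [← Ideal.Quotient.eq_zero_iff_mem] at hd ⊢
  exact eq_zero_of_mul_eq_zero_of_maximalIdeal_eq_span hmS hy (by rwa [map_mul] at hd)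

end LocalRing

section LocalDomain

variable {R : Type*} [CommRing R] [IsDomain R] [IsNoetherianRing R] [IsLocalRing R]

lemma dvd_of_forall_mem_maximalIdeal_dvd_mul (hdim : 1 < ringKrullDim R) {x y : R}
    (hm : maximalIdeal R = span {x, y}) {θ g : R} (h : ∀ u ∈ maximalIdeal R, θ ∣ g * u) :
    θ ∣ g := by
  have hx : x ≠ 0 := left_ne_zero_of_radical_span_pair_eq_maximalIdeal hdim
    (hm ▸ (maximalIdeal.isMaximal R).isPrime.radical : (span {x, y}).radical = maximalIdeal R)
  obtain ⟨u, hu⟩ := h x (hm ▸ subset_span (by simp))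
  obtain ⟨v, hv⟩ := h y (hm ▸ subset_span (by simp))
  rcases eq_or_ne θ 0 with rfl | hθ
  · simpa [hx] using hu
  have hyu : y * u = v * x := mul_left_cancel₀ hθ (by linear_combination x * hv - y * hu)
  obtain ⟨k, rfl⟩ := mem_span_singleton'.mp
    (mem_span_singleton_of_mul_mem hdim hm (hyu ▸ mem_span_singleton.mpr (dvd_mul_left x v)))
  exact ⟨k, mul_right_cancel₀ hx (by linear_combination hu)⟩

lemma dvd_of_forall_mem_maximalIdeal_pow_dvd_mul (hdim : 1 < ringKrullDim R) {x y : R}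
    (hm : maximalIdeal R = span {x, y}) {θ g : R} (k : ℕ)
    (h : ∀ u ∈ maximalIdeal R ^ k, θ ∣ g * u) : θ ∣ g := by
  induction k with
  | zero => simpa using h 1 (by simp)
  | succ k ih =>
    refine ih fun u hu => dvd_of_forall_mem_maximalIdeal_dvd_mul hdim hm fun w hw => ?_
    simpa [mul_assoc] using h (u * w) (pow_succ (maximalIdeal R) k ▸ mul_mem_mul hu hw)

lemma dvd_of_dvd_mul_of_dvd_mul (hdim : 1 < ringKrullDim R) {x y : R}
    (hm : maximalIdeal R = span {x, y}) {a b θ g : R}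
    (hQ : (span {a, b}).radical = maximalIdeal R) (ha : θ ∣ g * a) (hb : θ ∣ g * b) :
    θ ∣ g := by
  obtain ⟨k, hk⟩ := exists_pow_le_of_le_radical_of_fg hQ.ge (IsNoetherian.noetherian _)
  refine dvd_of_forall_mem_maximalIdeal_pow_dvd_mul hdim hm k fun u hu => ?_
  obtain ⟨c, d, rfl⟩ := mem_span_pair.mp (hk hu)
  simpa [mul_add, mul_left_comm g] using
    dvd_add (dvd_mul_of_dvd_right ha c) (dvd_mul_of_dvd_right hb d)

lemma exists_eq_mul_of_mul_add_mul_eq_zero (hdim : 1 < ringKrullDim R) {x y : R}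
    (hm : maximalIdeal R = span {x, y}) {a b u v : R}
    (hQ : (span {a, b}).radical = maximalIdeal R) (h : u * a + v * b = 0) :
    ∃ s, u = s * b ∧ v = -(s * a) := by
  have ha : a ≠ 0 := left_ne_zero_of_radical_span_pair_eq_maximalIdeal hdim hQ
  obtain ⟨s, rfl⟩ := dvd_of_dvd_mul_of_dvd_mul hdim hm hQ (dvd_mul_left a v)
    ⟨-u, by linear_combination h⟩
  exact ⟨-s, mul_right_cancel₀ ha (by linear_combination h), by ring⟩

lemma colon_maximalIdeal_eq_sup_span_det (hdim : 1 < ringKrullDim R) {x y a b α β γ δ : R}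
    (hm : maximalIdeal R = span {x, y}) (hQ : (span {a, b}).radical = maximalIdeal R)
    (ha : a = α * x + β * y) (hb : b = γ * x + δ * y) :
    (span {a, b}).colon (maximalIdeal R) = span {a, b} ⊔ span {α * δ - β * γ} := by
  have hxy : (span {x, y}).radical = maximalIdeal R :=
    hm ▸ (maximalIdeal.isMaximal R).isPrime.radical
  have hx : x ≠ 0 := left_ne_zero_of_radical_span_pair_eq_maximalIdeal hdim hxy
  rw [hm]
  refine le_antisymm (fun f hf => ?_)
    (sup_le le_colon (span_singleton_le_iff_mem _ |>.mpr (det_mem_colon ha hb)))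
  obtain ⟨hfx, hfy⟩ := mem_colon_span_pair.mp hf
  obtain ⟨p₁, q₁, h₁⟩ := mem_span_pair.mp hfx
  obtain ⟨p₂, q₂, h₂⟩ := mem_span_pair.mp hfy
  obtain ⟨s, hs₁, hs₂⟩ := exists_eq_mul_of_mul_add_mul_eq_zero hdim hm hQ
    (u := y * p₁ - x * p₂) (v := y * q₁ - x * q₂) (by linear_combination y * h₁ - x * h₂)
  obtain ⟨k₁, -, hk₁⟩ := exists_eq_mul_of_mul_add_mul_eq_zero hdim hm hxy
    (u := p₂ + s * γ) (v := s * δ - p₁) (by linear_combination -hs₁ - s * hb)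
  obtain ⟨k₂, -, hk₂⟩ := exists_eq_mul_of_mul_add_mul_eq_zero hdim hm hxy
    (u := q₂ - s * α) (v := -(q₁ + s * β)) (by linear_combination -hs₂ + s * ha)
  have hf : f = k₁ * a + k₂ * b + s * (α * δ - β * γ) := mul_right_cancel₀ hx (by
    linear_combination -h₁ - a * hk₁ - b * hk₂ + s * δ * ha - s * β * hb)
  exact hf ▸ Submodule.mem_sup.mpr
    ⟨_, mem_span_pair.mpr ⟨k₁, k₂, rfl⟩, _, mem_span_singleton.mpr (dvd_mul_left _ s), rfl⟩

lemma mem_mul_colon_of_mem_sq_colon (hdim : 1 < ringKrullDim R) {x y a b w : R}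
    (hm : maximalIdeal R = span {x, y}) (hQ : (span {a, b}).radical = maximalIdeal R)
    (hw : w ∈ span {a, b}) (hwm : w ∈ (span {a, b} ^ 2).colon (maximalIdeal R)) :
    w ∈ span {a, b} * (span {a, b}).colon (maximalIdeal R) := by
  obtain ⟨u, v, rfl⟩ := mem_span_pair.mp hw
  have hmul_mem : ∀ ℓ ∈ maximalIdeal R, u * ℓ ∈ span {a, b} ∧ v * ℓ ∈ span {a, b} := by
    intro ℓ hℓ
    obtain ⟨p, hp, q, hq, h⟩ :=
      mem_mul_span_pair.mp (sq (span {a, b}) ▸ Submodule.mem_colon.mp hwm ℓ hℓ)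
    obtain ⟨s, hs₁, hs₂⟩ := exists_eq_mul_of_mul_add_mul_eq_zero hdim hm hQ
      (u := u * ℓ - p) (v := v * ℓ - q) (by rw [smul_eq_mul] at h; linear_combination -h)
    exact ⟨eq_add_of_sub_eq hs₁ ▸ add_mem (mul_mem_left _ s (subset_span (by simp))) hp,
      eq_add_of_sub_eq hs₂ ▸ add_mem (neg_mem (mul_mem_left _ s (subset_span (by simp)))) hq⟩
  have hu : u ∈ (span {a, b}).colon (maximalIdeal R) :=
    Submodule.mem_colon.mpr fun ℓ hℓ => (hmul_mem ℓ hℓ).1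
  have hv : v ∈ (span {a, b}).colon (maximalIdeal R) :=
    Submodule.mem_colon.mpr fun ℓ hℓ => (hmul_mem ℓ hℓ).2
  rw [mul_comm u, mul_comm v]
  exact add_mem (mul_mem_mul (subset_span (by simp)) hu) (mul_mem_mul (subset_span (by simp)) hv)

lemma det_sq_mem_mul_colon (hdim : 1 < ringKrullDim R) {x y a b α β γ δ : R}
    (hm : maximalIdeal R = span {x, y}) (hQ : (span {a, b}).radical = maximalIdeal R)
    (hα : α ∈ maximalIdeal R) (hβ : β ∈ maximalIdeal R) (hγ : γ ∈ maximalIdeal R)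
    (hδ : δ ∈ maximalIdeal R) (ha : a = α * x + β * y) (hb : b = γ * x + δ * y) :
    (α * δ - β * γ) ^ 2 ∈ span {a, b} * (span {a, b}).colon (maximalIdeal R) := by
  set Δ := α * δ - β * γ
  have hΔ : ∀ ℓ ∈ maximalIdeal R, Δ * ℓ ∈ span {a, b} := fun ℓ hℓ =>
    Submodule.mem_colon.mp (hm ▸ det_mem_colon ha hb) ℓ hℓ
  have hQQ : ∀ {p q : R}, p ∈ span {a, b} → q ∈ span {a, b} → p * q ∈ span {a, b} ^ 2 :=
    fun hp hq => sq (span {a, b}) ▸ mul_mem_mul hp hq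
  have haQ : a ∈ span {a, b} := subset_span (by simp)
  have hbQ : b ∈ span {a, b} := subset_span (by simp)
  refine mem_mul_colon_of_mem_sq_colon hdim hm hQ (sq Δ ▸ hΔ Δ ?_) ?_
  · exact sub_mem (mul_mem_right _ _ hα) (mul_mem_right _ _ hβ)
  rw [hm, mem_colon_span_pair]
  constructor
  · have : Δ ^ 2 * x = (Δ * δ) * a - (Δ * β) * b := by rw [ha, hb]; ring
    exact this ▸ sub_mem (hQQ (hΔ δ hδ) haQ) (hQQ (hΔ β hβ) hbQ)
  · have : Δ ^ 2 * y = (Δ * α) * b - (Δ * γ) * a := by rw [ha, hb]; ring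
    exact this ▸ sub_mem (hQQ (hΔ α hα) hbQ) (hQQ (hΔ γ hγ) haQ)

end LocalDomain

theorem stmt_18 (R : Type*) [CommRing R] [IsDomain R] [IsNoetherianRing R] [IsLocalRing R]
    (hdim : ringKrullDim R = 2) (x y : R)
    (hm : maximalIdeal R = Ideal.span {x, y})
    (a b : R)
    (hQm2 : (Ideal.span {a, b} : Ideal R) ≤ maximalIdeal R ^ 2)
    (hQ : (Ideal.span {a, b} : Ideal R).radical = maximalIdeal R)
    (I : Ideal R) (hI : I = Submodule.colon (Ideal.span {a, b} : Ideal R) (maximalIdeal R)) :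
    I ^ 2 = Ideal.span {a, b} * I := by
  have hdim' : 1 < ringKrullDim R := by rw [hdim]; norm_num
  have hm2 : maximalIdeal R ^ 2 = maximalIdeal R * span {x, y} := by rw [← hm, sq]
  have haQ : a ∈ span {a, b} := subset_span (by simp)
  have hbQ : b ∈ span {a, b} := subset_span (by simp)
  obtain ⟨α, hα, β, hβ, ha⟩ := mem_mul_span_pair.mp (hm2 ▸ hQm2 haQ)
  obtain ⟨γ, hγ, δ, hδ, hb⟩ := mem_mul_span_pair.mp (hm2 ▸ hQm2 hbQ)
  refine sq_eq_mul_of_eq_sup_span_singleton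
    (hI.trans (colon_maximalIdeal_eq_sup_span_det hdim' hm hQ ha.symm hb.symm)) ?_
  exact hI ▸ det_sq_mem_mul_colon hdim' hm hQ hα hβ hγ hδ ha.symm hb.symm
end
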